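/- Over a polymatroid with rank function f on {1,…,M}, the corner point that maximizes the minimum component among all corner points is the one obtained by ordering users so that rates increase from bottom to top; in particular for M=2 with f symmetric in the sense f({1}) ≤ f({2}), the corner point (f({1}), f({1,2})−f({1})) maximizes min(r₁,r₂) over all points of the polymatroid whenever f({1}) ≤ f({1,2})−f({1}). -/

import Mathlib

open Finset

/-- Submodularity of a set function. -/
def Submodular {M : ℕ} (f : Finset (Fin M) → ℝ) : Prop :=
  ∀ S T : Finset (Fin M), f (S ∪ T) + f (S ∩ T) ≤ f S + f T

/-- Membership in the polymatroid with rank function `f`. -/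
def InPoly {M : ℕ} (f : Finset (Fin M) → ℝ) (r : Fin M → ℝ) : Prop :=
  (∀ i, 0 ≤ r i) ∧ ∀ S : Finset (Fin M), ∑ i ∈ S, r i ≤ f S

theorem Submodular.le_add_of_disjoint {M : ℕ} {f : Finset (Fin M) → ℝ} (hsub : Submodular f)
    (h0 : f ∅ = 0) {S T : Finset (Fin M)} (hST : Disjoint S T) : f (S ∪ T) ≤ f S + f T := by
  simpa [disjoint_iff_inter_eq_empty.mp hST, h0] using hsub S T

theorem InPoly.le_apply_singleton {M : ℕ} {f : Finset (Fin M) → ℝ} {r : Fin M → ℝ}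
    (hr : InPoly f r) (i : Fin M) : r i ≤ f {i} := by
  simpa using hr.2 {i}

theorem inPoly_corner_fin_two (f : Finset (Fin 2) → ℝ) (h0 : f ∅ = 0)
    (hmono : ∀ S T, S ⊆ T → f S ≤ f T) (hsub : Submodular f) :
    InPoly f (fun i => if i = 0 then f {0} else f univ - f {0}) := by
  have h0_le : f ∅ ≤ f {0} := hmono _ _ (empty_subset _)
  have h0_le_univ : f {0} ≤ f univ := hmono _ _ (subset_univ _)
  have huniv_le : f univ ≤ f {0} + f {1} := by
    have hunion : ({0} ∪ {1} : Finset (Fin 2)) = univ := by decide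
    simpa only [hunion] using hsub.le_add_of_disjoint h0 (S := {0}) (T := {1}) (by decide)
  refine ⟨fun i => ?_, fun S => ?_⟩
  · fin_cases i <;> simp <;> linarith
  · have hS : S = ∅ ∨ S = {0} ∨ S = {1} ∨ S = univ := by revert S; decide
    rcases hS with rfl | rfl | rfl | rfl <;> simp [h0, Fin.sum_univ_two]
    linarith

/-- Max-min fairness at a corner point, `M = 2`: if `f {0} ≤ f univ - f {0}` then the corner
point `(f {0}, f univ - f {0})` lies in the polymatroid, its minimum component is `f {0}`,
and every point of the polymatroid has minimum component at most `f {0}`; i.e. this corner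
point maximizes `min r₁ r₂`. -/
theorem stmt9 (f : Finset (Fin 2) → ℝ)
    (h0 : f ∅ = 0) (hmono : ∀ S T, S ⊆ T → f S ≤ f T) (hsub : Submodular f)
    (hbal : f {0} ≤ f Finset.univ - f {0}) :
    InPoly f (fun i => if i = 0 then f {0} else f Finset.univ - f {0}) ∧
    min (f {0}) (f Finset.univ - f {0}) = f {0} ∧
    ∀ r : Fin 2 → ℝ, InPoly f r → min (r 0) (r 1) ≤ f {0} :=
  ⟨inPoly_corner_fin_two f h0 hmono hsub, min_eq_left hbal,
    fun _ hr => (min_le_left _ _).trans (hr.le_apply_singleton 0)⟩
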